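/- Let n ≥ 2, k ≥ 1, and let α ∈ [n]^n be a complete k-Naples parking function (α ∈ PF_{n,k}). Let j_1 < j_2 < … < j_m be all the indices such that a_{j_i} is an RTL-maximum of α. Then a_{j_i} − a_{j_{i+1}} ≤ k for all 1 ≤ i ≤ m−1, and a_{j_m} ≤ k+1. -/

import Mathlib

/-!
If the cars after `c_j` all prefer spots `≤ M` (with `M ≥ 1`), completeness gives, for every
spot `s ∈ [M+1, n]`, at least `n - s + 1` cars before `c_j` preferring a spot `≥ s`. A car
preferring a spot `≥ s` while `s` is free parks at or after `s`, and never on `s` itself while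
`s` stays free, so these cars would need `n - s + 1` distinct spots in `(s, n]`. Hence `[M+1, n]`
is full when `c_j` arrives, and `c_j` can only park if `a_j - k ≤ M`.
Between consecutive RTL-maxima `a_j, a_{j'}` every entry after `a_j` is `≤ a_{j'}`; the last
RTL-maximum is the last entry, so there one takes `M = a_j - k - 1`.
-/

open Finset

/-- The spot where a single car parks on a one-way street with spots `1,…,n`:
`occ` is the set of already occupied spots, `p` is the car's preference, and
`r` is its backward allowance (it follows the `r`-Naples rule).  If spot `p`
is free the car parks there; otherwise it checks spots `p-1, p-2, …, max (p-r) 1`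
and parks in the first free one among these; otherwise it parks in the smallest
free spot `> p` (and `≤ n`); `none` means the car fails to park. -/
def parkSpot (n : ℕ) (occ : Finset ℕ) (p r : ℕ) : Option ℕ :=
  if p ∈ occ then
    if hb : ((Finset.Ico (max 1 (p - r)) p).filter (fun j => j ∉ occ)).Nonempty then
      some (((Finset.Ico (max 1 (p - r)) p).filter (fun j => j ∉ occ)).max' hb)
    else if hf : ((Finset.Ioc p n).filter (fun j => j ∉ occ)).Nonempty then
      some (((Finset.Ioc p n).filter (fun j => j ∉ occ)).min' hf)
    else none
  else some p

/-- The set of occupied spots after the first `i` of the `m` cars (with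
preferences `a` and backward allowances `r`) have attempted to park on a
street with `n` spots. -/
def occUpTo (n m : ℕ) (a r : Fin m → ℕ) : ℕ → Finset ℕ
  | 0 => ∅
  | i + 1 =>
    let occ := occUpTo n m a r i
    if h : i < m then
      match parkSpot n occ (a ⟨i, h⟩) (r ⟨i, h⟩) with
      | some s => insert s occ
      | none => occ
    else occ

/-- The outcome map: the spot where car `c_i` parks (`none` if it fails to park),
when the `m` cars with preferences `a` park on `n` spots, car `c_i` following
the `r i`-Naples rule. -/
def outcome (n m : ℕ) (a r : Fin m → ℕ) (i : Fin m) : Option ℕ :=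
  parkSpot n (occUpTo n m a r i.val) (a i) (r i)

/-- The outcome map with values in `ℕ∞`: failure to park is recorded as `∞`. -/
def outcomeE (n m : ℕ) (a r : Fin m → ℕ) (i : Fin m) : ENat :=
  (outcome n m a r i).elim ⊤ (fun s => (s : ENat))

/-- All `m` cars (preferences `a`, car `c_i` following the `r i`-Naples rule)
are able to park on the street with `n` spots.  For `m = n` this says that `r`
is a parking strategy for `a`, i.e. `(a, r) ∈ PR_n`. -/
def AllPark (n m : ℕ) (a r : Fin m → ℕ) : Prop :=
  ∀ i : Fin m, (outcome n m a r i).isSome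

instance (n m : ℕ) (a r : Fin m → ℕ) : Decidable (AllPark n m a r) := by
  unfold AllPark; infer_instance

/-- `a ∈ PF_{n,k}`: `a` is a `k`-Naples parking function of length `n`. -/
def NaplesPF (n k : ℕ) (a : Fin n → ℕ) : Prop :=
  AllPark n n a (fun _ => k)

instance (n k : ℕ) (a : Fin n → ℕ) : Decidable (NaplesPF n k a) := by
  unfold NaplesPF; infer_instance

/-- `a ∈ PF_n`: `a` is a (standard) parking function of length `n`. -/
def IsPF (n : ℕ) (a : Fin n → ℕ) : Prop := NaplesPF n 0 a

instance (n : ℕ) (a : Fin n → ℕ) : Decidable (IsPF n a) := by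
  unfold IsPF; infer_instance

/-- `u_α(j) = Σ_{i=j}^n |α|_i − (n−j+1) = #{i : a_i ≥ j} − (n−j+1)`. -/
def ucount (n : ℕ) (a : Fin n → ℕ) (j : ℕ) : ℤ :=
  ((Finset.univ.filter (fun i : Fin n => j ≤ a i)).card : ℤ) - ((n : ℤ) - (j : ℤ) + 1)

/-- `U_α = {j ∈ [n] : u_α(j) ≥ 1}`. -/
def Uset (n : ℕ) (a : Fin n → ℕ) : Finset ℕ :=
  (Finset.Icc 1 n).filter (fun j => 1 ≤ ucount n a j)

/-- A parking preference of length `n` is complete if `U_α = {2,…,n}`. -/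
def Complete (n : ℕ) (a : Fin n → ℕ) : Prop :=
  Uset n a = Finset.Icc 2 n

instance (n : ℕ) (a : Fin n → ℕ) : Decidable (Complete n a) := by
  unfold Complete; infer_instance

/-- `[p,q]` is a maximal interval of `U_α`. -/
def MaxInterval (n : ℕ) (a : Fin n → ℕ) (p q : ℕ) : Prop :=
  p ≤ q ∧ (∀ j, p ≤ j → j ≤ q → j ∈ Uset n a) ∧ p - 1 ∉ Uset n a ∧ q + 1 ∉ Uset n a

/-- `a_j` is an RTL-maximum (right-to-left maximum) of `a`. -/
def IsRTLMax (n : ℕ) (a : Fin n → ℕ) (j : Fin n) : Prop :=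
  ∀ i : Fin n, j < i → a i < a j

section Street

variable {n : ℕ} {occ : Finset ℕ} {p r σ : ℕ}

lemma parkSpot_not_mem (h : parkSpot n occ p r = some σ) : σ ∉ occ := by
  unfold parkSpot at h
  split_ifs at h with hp hb hf <;> cases h
  · exact (mem_filter.mp (max'_mem _ hb)).2
  · exact (mem_filter.mp (min'_mem _ hf)).2
  · exact hp

lemma parkSpot_le (hp : p ≤ n) (h : parkSpot n occ p r = some σ) : σ ≤ n := by
  unfold parkSpot at h
  split_ifs at h with _ hb hf <;> cases h
  · have := (mem_filter.mp (max'_mem _ hb)).1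
    rw [mem_Ico] at this; omega
  · exact (mem_Ioc.mp (mem_filter.mp (min'_mem _ hf)).1).2
  · exact hp

lemma le_parkSpot {s : ℕ} (hs : s ∉ occ) (hsp : s ≤ p) (h : parkSpot n occ p r = some σ) :
    s ≤ σ := by
  unfold parkSpot at h
  split_ifs at h with hp hb hf <;> cases h
  · by_cases hlow : max 1 (p - r) ≤ s
    · have hsp' : s < p := lt_of_le_of_ne hsp (by rintro rfl; exact hs hp)
      exact le_max' _ s (mem_filter.mpr ⟨mem_Ico.mpr ⟨hlow, hsp'⟩, hs⟩)
    · have := (mem_filter.mp (max'_mem _ hb)).1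
      rw [mem_Ico] at this; omega
  · have := (mem_filter.mp (min'_mem _ hf)).1
    rw [mem_Ioc] at this; omega
  · exact hsp

lemma parkSpot_eq_none (hp : p ≤ n) (h : Icc (p - r) n ⊆ occ) : parkSpot n occ p r = none := by
  have hocc : ∀ x, p - r ≤ x → x ≤ n → x ∈ occ := fun x h₁ h₂ => h (mem_Icc.mpr ⟨h₁, h₂⟩)
  have hback : (Ico (max 1 (p - r)) p).filter (· ∉ occ) = ∅ := by
    ext x
    simp only [mem_filter, mem_Ico, notMem_empty, iff_false, not_and, not_not]
    rintro ⟨h₁, h₂⟩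
    exact hocc x (le_of_max_le_right h₁) (by omega)
  have hfwd : (Ioc p n).filter (· ∉ occ) = ∅ := by
    ext x
    simp only [mem_filter, mem_Ioc, notMem_empty, iff_false, not_and, not_not]
    rintro ⟨h₁, h₂⟩
    exact hocc x (by omega) h₂
  unfold parkSpot
  simp [hocc p (Nat.sub_le p r) hp, hback, hfwd]

end Street

section Occupation

variable {n m : ℕ} {a r : Fin m → ℕ} {σ : ℕ}

lemma occUpTo_mono : Monotone (occUpTo n m a r) := by
  refine monotone_nat_of_le_succ fun t => ?_
  conv_rhs => rw [occUpTo]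
  split_ifs with ht
  · split
    · exact subset_insert _ _
    · exact subset_rfl
  · exact subset_rfl

lemma occUpTo_succ_of_outcome_eq_some {i : Fin m} (h : outcome n m a r i = some σ) :
    occUpTo n m a r (i.val + 1) = insert σ (occUpTo n m a r i.val) := by
  rw [occUpTo, dif_pos i.isLt]
  unfold outcome at h
  simp only [Fin.eta, h]

lemma mem_occUpTo_of_outcome_eq_some {i : Fin m} {t : ℕ} (hit : i.val < t)
    (h : outcome n m a r i = some σ) : σ ∈ occUpTo n m a r t :=
  occUpTo_mono hit (by rw [occUpTo_succ_of_outcome_eq_some h]; exact mem_insert_self _ _)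

lemma outcome_injective {i i' : Fin m} (h : outcome n m a r i = some σ)
    (h' : outcome n m a r i' = some σ) : i = i' := by
  have key : ∀ {i i' : Fin m}, outcome n m a r i = some σ → outcome n m a r i' = some σ →
      ¬ i < i' := fun h h' hlt =>
    parkSpot_not_mem h' (mem_occUpTo_of_outcome_eq_some hlt h)
  exact le_antisymm (not_lt.mp (key h' h)) (not_lt.mp (key h h'))

/-- The cars before time `t` with preference `≥ s`, where spot `s` is still free at time `t`,
park injectively in `(s, n]`. -/
lemma AllPark.card_filter_le (hpark : AllPark n m a r) (ha : ∀ i, a i ≤ n) {t s : ℕ}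
    (hs : s ∉ occUpTo n m a r t) :
    #{i | i.val < t ∧ s ≤ a i} ≤ n - s := by
  choose f hf using fun i => Option.isSome_iff_exists.mp (hpark i)
  have hmaps : ∀ i ∈ ({i | i.val < t ∧ s ≤ a i} : Finset (Fin m)), f i ∈ Ioc s n := by
    intro i hi
    obtain ⟨hit, hsi⟩ := (mem_filter.mp hi).2
    have hs_i : s ∉ occUpTo n m a r i.val := fun hmem => hs (occUpTo_mono hit.le hmem)
    have hne : f i ≠ s := by
      intro hfi
      exact hs (hfi ▸ mem_occUpTo_of_outcome_eq_some hit (hf i))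
    exact mem_Ioc.mpr ⟨lt_of_le_of_ne (le_parkSpot hs_i hsi (hf i)) hne.symm,
      parkSpot_le (ha i) (hf i)⟩
  have hinj : Set.InjOn f ({i | i.val < t ∧ s ≤ a i} : Finset (Fin m)) :=
    fun i _ i' _ hii' => outcome_injective (hf i) (hii' ▸ hf i')
  simpa using card_le_card_of_injOn f hmaps hinj

end Occupation

lemma Complete.le_card_filter_le_add {n : ℕ} {a : Fin n → ℕ} (hcomp : Complete n a) {s : ℕ}
    (h2s : 2 ≤ s) (hsn : s ≤ n) : n + 2 ≤ #{i | s ≤ a i} + s := by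
  have hs : s ∈ Uset n a := by rw [hcomp]; exact mem_Icc.mpr ⟨h2s, hsn⟩
  have := (mem_filter.mp hs).2
  unfold ucount at this
  omega

section NaplesPF

variable {n k : ℕ} {a : Fin n → ℕ}

lemma Complete.mem_occUpTo_of_forall_gt_le (hcomp : Complete n a) (hpf : NaplesPF n k a)
    (ha : ∀ i, a i ≤ n) {j : Fin n} {M : ℕ} (hM : 1 ≤ M) (hlater : ∀ i, j < i → a i ≤ M)
    {s : ℕ} (hMs : M < s) (hsn : s ≤ n) : s ∈ occUpTo n n a (fun _ => k) j.val := by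
  by_contra hs
  have hearlier := hpf.card_filter_le ha hs
  have hsub : ({i | s ≤ a i} : Finset (Fin n)) ⊆
      insert j ({i | i.val < j.val ∧ s ≤ a i} : Finset (Fin n)) := by
    intro i hi
    have hsi := (mem_filter.mp hi).2
    rcases lt_trichotomy i j with hij | rfl | hji
    · exact mem_insert_of_mem (mem_filter.mpr ⟨mem_univ _, hij, hsi⟩)
    · exact mem_insert_self _ _
    · exact absurd (hlater i hji) (by omega)
  have := (card_le_card hsub).trans (card_insert_le _ _)
  have := hcomp.le_card_filter_le_add (s := s) (by omega) hsn
  omega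

lemma Complete.le_add_of_forall_gt_le (hcomp : Complete n a) (hpf : NaplesPF n k a)
    (ha : ∀ i, a i ≤ n) {j : Fin n} {M : ℕ} (hM : 1 ≤ M) (hlater : ∀ i, j < i → a i ≤ M) :
    a j ≤ M + k := by
  by_contra hgt
  have hfull : Icc (a j - k) n ⊆ occUpTo n n a (fun _ => k) j.val := fun s hs =>
    hcomp.mem_occUpTo_of_forall_gt_le hpf ha hM hlater (by rw [mem_Icc] at hs; omega)
      (mem_Icc.mp hs).2
  have := hpf j
  rw [outcome, parkSpot_eq_none (ha j) hfull] at this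
  exact Bool.false_ne_true this

end NaplesPF

section RTLMax

variable {n : ℕ} {a : Fin n → ℕ}

/-- The last position of a maximal value of `a` on `[i, n)`. -/
lemma exists_isRTLMax_ge (i : Fin n) :
    ∃ i₀, i ≤ i₀ ∧ IsRTLMax n a i₀ ∧ ∀ l, i ≤ l → a l ≤ a i₀ := by
  obtain ⟨x, hx, hxmax⟩ := exists_max_image (Ici i) a ⟨i, mem_Ici.mpr le_rfl⟩
  set T := (Ici i).filter (fun l => a l = a x)
  have hne : T.Nonempty := ⟨x, mem_filter.mpr ⟨hx, rfl⟩⟩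
  obtain ⟨hi₀, hai₀⟩ := mem_filter.mp (max'_mem T hne)
  refine ⟨T.max' hne, mem_Ici.mp hi₀, fun l hl => ?_, fun l hl => ?_⟩
  · have hil : l ∈ Ici i := mem_Ici.mpr ((mem_Ici.mp hi₀).trans hl.le)
    refine lt_of_le_of_ne (hai₀ ▸ hxmax l hil) fun heq => ?_
    exact not_le_of_gt hl (le_max' T l (mem_filter.mpr ⟨hil, heq.trans hai₀⟩))
  · exact hai₀ ▸ hxmax l (mem_Ici.mpr hl)

lemma IsRTLMax.le_of_forall_between {j j' : Fin n} (hj' : IsRTLMax n a j')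
    (hbetween : ∀ i, j < i → i < j' → ¬ IsRTLMax n a i) {i : Fin n} (hji : j < i) :
    a i ≤ a j' := by
  obtain ⟨i₀, hii₀, hi₀, hmax⟩ := exists_isRTLMax_ge (a := a) i
  rcases lt_trichotomy i₀ j' with hlt | rfl | hgt
  · exact absurd hi₀ (hbetween i₀ (hji.trans_le hii₀) hlt)
  · exact hmax i le_rfl
  · exact (hmax i le_rfl).trans (hj' i₀ hgt).le

lemma not_lt_of_forall_gt_not_isRTLMax {j : Fin n} (hlast : ∀ i, j < i → ¬ IsRTLMax n a i)
    (i : Fin n) : ¬ j < i := by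
  intro hji
  obtain ⟨i₀, hii₀, hi₀, -⟩ := exists_isRTLMax_ge (a := a) i
  exact hlast i₀ (hji.trans_le hii₀) hi₀

end RTLMax

theorem statement11_general (n k : ℕ) (a : Fin n → ℕ)
    (ha : ∀ i, a i ∈ Finset.Icc 1 n) (hcomp : Complete n a)
    (hpf : NaplesPF n k a) :
    (∀ j j' : Fin n, IsRTLMax n a j → IsRTLMax n a j' → j < j' →
        (∀ i : Fin n, j < i → i < j' → ¬ IsRTLMax n a i) →
        (a j : ℤ) - (a j' : ℤ) ≤ (k : ℤ)) ∧
    (∀ j : Fin n, IsRTLMax n a j →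
        (∀ i : Fin n, j < i → ¬ IsRTLMax n a i) → a j ≤ k + 1) := by
  have hle : ∀ i, a i ≤ n := fun i => (mem_Icc.mp (ha i)).2
  refine ⟨fun j j' _ hj' _ hbetween => ?_, fun j _ hlast => ?_⟩
  · have := hcomp.le_add_of_forall_gt_le hpf hle (mem_Icc.mp (ha j')).1
      fun i hji => hj'.le_of_forall_between hbetween hji
    omega
  · by_contra hgt
    have := hcomp.le_add_of_forall_gt_le hpf hle (j := j) (M := a j - (k + 1)) (by omega)
      fun i hji => absurd hji (not_lt_of_forall_gt_not_isRTLMax hlast i)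
    omega

/-- if `α ∈ PF_{n,k}` is complete, then any two consecutive
RTL-maxima differ by at most `k`, and the last RTL-maximum is at most `k+1`. -/
theorem statement11 (n k : ℕ) (hn : 2 ≤ n) (hk : 1 ≤ k) (a : Fin n → ℕ)
    (ha : ∀ i, a i ∈ Finset.Icc 1 n) (hcomp : Complete n a)
    (hpf : NaplesPF n k a) :
    (∀ j j' : Fin n, IsRTLMax n a j → IsRTLMax n a j' → j < j' →
        (∀ i : Fin n, j < i → i < j' → ¬ IsRTLMax n a i) →
        (a j : ℤ) - (a j' : ℤ) ≤ (k : ℤ)) ∧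
    (∀ j : Fin n, IsRTLMax n a j →
        (∀ i : Fin n, j < i → ¬ IsRTLMax n a i) → a j ≤ k + 1) :=
  statement11_general n k a ha hcomp hpf
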